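/- No nonzero harmonic homogeneous polynomial of degree m in the Plücker variables lies in the ideal generated by Q restricted to degree m, i.e. if H is harmonic and H = Q·A for some polynomial A, then H = 0. -/

import Mathlib

/-!
For `B` homogeneous of degree `n`, the Leibniz rule for `Δ` together with `Δ Q = 3` and Euler's
identity `{Q, B} = n • B` give `Δ (Q B) = (n + 3) B + Q Δ B`. Hence if `H = Q B` satisfies
`Q Δ H + c H = 0`, cancelling `Q` yields `Q Δ B + (c + n + 3) B = 0`; when `c + n + 3 ≠ 0` this
shows that `B` is again a multiple of `Q`, and we conclude by induction on the degree, starting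
from `c = 0` for a harmonic `H`.
-/

open MvPolynomial

/- Variable convention: `0 ↔ p₀₁, 1 ↔ p₀₂, 2 ↔ p₀₃, 3 ↔ p₁₂, 4 ↔ p₁₃, 5 ↔ p₂₃`. -/

/-- The Plücker quadric (Pfaffian) `Q = p₀₁p₂₃ − p₀₂p₁₃ + p₀₃p₁₂`. -/
noncomputable def Qp : MvPolynomial (Fin 6) ℂ := X 0 * X 5 - X 1 * X 4 + X 2 * X 3

/-- The Laplace operator `Δ = ∂²/∂p₀₁∂p₂₃ − ∂²/∂p₀₂∂p₁₃ + ∂²/∂p₀₃∂p₁₂`. -/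
noncomputable def lap (F : MvPolynomial (Fin 6) ℂ) : MvPolynomial (Fin 6) ℂ :=
  pderiv 5 (pderiv 0 F) - pderiv 4 (pderiv 1 F) + pderiv 3 (pderiv 2 F)

/-- The Cayley bracket `{F,G} = ⟨∇F, ∇G⟩`, the symmetric pairing of gradients
via the Pfaffian form. -/
noncomputable def cbrk (F G : MvPolynomial (Fin 6) ℂ) : MvPolynomial (Fin 6) ℂ :=
  pderiv 0 F * pderiv 5 G + pderiv 5 F * pderiv 0 G
  - pderiv 1 F * pderiv 4 G - pderiv 4 F * pderiv 1 G
  + pderiv 2 F * pderiv 3 G + pderiv 3 F * pderiv 2 G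

namespace MvPolynomial.IsHomogeneous

attribute [local instance] MvPolynomial.gradedAlgebra

variable {σ R : Type*} [CommSemiring R] {P A H : MvPolynomial σ R} {d m : ℕ}

theorem eq_zero_of_eq_mul_of_lt (hH : H.IsHomogeneous m) (hP : P.IsHomogeneous d)
    (hmd : m < d) (h : H = P * A) : H = 0 := by
  rw [← homogeneousComponent_eq_self hH, h, ← decomposition.decompose'_apply]
  exact DirectSum.coe_decompose_mul_of_left_mem_of_not_le _
    ((mem_homogeneousSubmodule _ _).mpr hP) hmd.not_ge

theorem eq_mul_homogeneousComponent (hH : H.IsHomogeneous (d + m)) (hP : P.IsHomogeneous d)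
    (h : H = P * A) : H = P * homogeneousComponent m A := by
  rw [← homogeneousComponent_eq_self hH, h, ← decomposition.decompose'_apply,
    ← decomposition.decompose'_apply]
  exact DirectSum.coe_decompose_mul_add_of_left_mem _ ((mem_homogeneousSubmodule _ _).mpr hP)

end MvPolynomial.IsHomogeneous

theorem isHomogeneous_Qp : Qp.IsHomogeneous 2 := by
  unfold Qp
  refine (IsHomogeneous.sub ?_ ?_).add ?_ <;>
    exact (isHomogeneous_X _ _).mul (isHomogeneous_X _ _)

theorem Qp_ne_zero : Qp ≠ 0 := by
  intro h
  have := congrArg (eval (Pi.single 0 1 + Pi.single 5 1)) h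
  simp [Qp] at this

theorem lap_mul (F G : MvPolynomial (Fin 6) ℂ) :
    lap (F * G) = lap F * G + F * lap G + cbrk F G := by
  simp only [lap, cbrk, pderiv_mul, map_add]
  ring

theorem lap_Qp : lap Qp = 3 := by
  simp only [lap, Qp, map_add, map_sub, Derivation.leibniz, pderiv_X, ne_eq, Fin.reduceEq,
    not_false_eq_true, Pi.single_eq_of_ne, smul_eq_mul, mul_zero, Pi.single_eq_same, mul_one,
    zero_add, one_ne_zero, add_zero, sub_zero, zero_ne_one, zero_sub, map_neg, sub_neg_eq_add,
    sub_self]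
  norm_num

theorem cbrk_Qp (B : MvPolynomial (Fin 6) ℂ) : cbrk Qp B = ∑ i, X i * pderiv i B := by
  simp only [cbrk, Qp, map_add, map_sub, Derivation.leibniz, pderiv_X, ne_eq, Fin.reduceEq,
    not_false_eq_true, Pi.single_eq_of_ne, smul_eq_mul, mul_zero, Pi.single_eq_same, mul_one,
    zero_add, one_ne_zero, add_zero, sub_zero, zero_ne_one, zero_sub, neg_mul, sub_neg_eq_add,
    sub_self, Fin.sum_univ_six]
  ring

theorem lap_Qp_mul {n : ℕ} {B : MvPolynomial (Fin 6) ℂ} (hB : B.IsHomogeneous n) :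
    lap (Qp * B) = C (n + 3 : ℂ) * B + Qp * lap B := by
  rw [lap_mul, lap_Qp, cbrk_Qp, hB.sum_X_mul_pderiv, nsmul_eq_mul, map_add, map_natCast,
    map_ofNat]
  ring

theorem eq_zero_of_Qp_mul_lap_add_C_mul_eq_zero {m : ℕ} {H A : MvPolynomial (Fin 6) ℂ}
    (hH : H.IsHomogeneous m) (hdiv : H = Qp * A) {c : ℂ} (hc : ∀ k : ℕ, c + (k + 1) ≠ 0)
    (h : Qp * lap H + C c * H = 0) : H = 0 := by
  induction m using Nat.strong_induction_on generalizing H A c with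
  | _ m ih =>
  rcases lt_or_ge m 2 with hm | hm
  · exact hH.eq_zero_of_eq_mul_of_lt isHomogeneous_Qp hm hdiv
  obtain ⟨n, rfl⟩ := Nat.exists_eq_add_of_le hm
  set B := homogeneousComponent n A
  have hHB : H = Qp * B := hH.eq_mul_homogeneousComponent isHomogeneous_Qp hdiv
  have hB : B.IsHomogeneous n := homogeneousComponent_isHomogeneous n A
  set c' : ℂ := c + (n + 2 + 1)
  have hc' : c' ≠ 0 := by simpa [c'] using hc (n + 2)
  have hB_eq : Qp * lap B + C c' * B = 0 := by
    apply mul_left_cancel₀ Qp_ne_zero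
    rw [mul_zero, ← h, hHB, lap_Qp_mul hB]
    simp only [c', map_add, map_natCast, map_ofNat, map_one]
    ring
  have hB_div : B = Qp * (C (-c'⁻¹) * lap B) :=
    calc B = C c'⁻¹ * (C c' * B) := by
          rw [← mul_assoc, ← C_mul, inv_mul_cancel₀ hc', C_1, one_mul]
      _ = Qp * (C (-c'⁻¹) * lap B) := by
          rw [eq_neg_of_add_eq_zero_right hB_eq, map_neg]
          ring
  have hc'_succ (k : ℕ) : c' + (k + 1) ≠ 0 := by
    convert hc (n + 2 + 1 + k) using 1
    push_cast [c']
    ring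
  rw [hHB, ih n (by omega) hB hB_div hc'_succ hB_eq, mul_zero]

/-- no nonzero harmonic homogeneous polynomial lies in the ideal
generated by `Q`: if `H` is harmonic homogeneous of degree `m` and `H = Q·A`,
then `H = 0`. -/
theorem stmt8 (m : ℕ) (H A : MvPolynomial (Fin 6) ℂ)
    (hH : H.IsHomogeneous m) (hharm : lap H = 0) (hdiv : H = Qp * A) :
    H = 0 :=
  eq_zero_of_Qp_mul_lap_add_C_mul_eq_zero hH hdiv (c := 0)
    (fun k => by simpa using Nat.cast_add_one_ne_zero k) (by simp [hharm])
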